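/- If a Q×Q matrix Φ of formulas φ_{p,q}(x̄,ȳ) is deterministic and every entry is expressible in first-order logic with k-ary deterministic transitive closure (FO+DTC^k), then every entry of its computation closure Φ^# is also expressible in FO+DTC^k. -/

import Mathlib

namespace NestedPebbles

/-- Trees over a ranked alphabet `(Sig, rank)`: terms `σ(t₁,…,tₙ)` with `rank σ = n`. -/
inductive RTree (Sig : Type) (rank : Sig → ℕ) : Type
  | node (a : Sig) (children : Fin (rank a) → RTree Sig rank) : RTree Sig rank

namespace RTree

variable {Sig : Type} {rank : Sig → ℕ}

/-- The label of the root symbol. -/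
def label : RTree Sig rank → Sig
  | node a _ => a

/-- The `i`-th (0-based) immediate subtree, if it exists. -/
def child : RTree Sig rank → ℕ → Option (RTree Sig rank)
  | node a c, i => if h : i < rank a then some (c ⟨i, h⟩) else none

/-- The subtree at a position (a list of 0-based child indices, read from the root). -/
def subtree : RTree Sig rank → List ℕ → Option (RTree Sig rank)
  | t, [] => some t
  | t, i :: p => (t.child i).bind fun s => s.subtree p

end RTree

variable {Sig : Type} {rank : Sig → ℕ}

/-- `p` is (the address of) a node of `t`. -/
def IsPos (t : RTree Sig rank) (p : List ℕ) : Prop := (t.subtree p).isSome = true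

/-- The type of nodes of a tree `t`, as valid positions. -/
def Pos (t : RTree Sig rank) : Type := { p : List ℕ // IsPos t p }

/-- The root node. -/
def rootPos (t : RTree Sig rank) : Pos t := ⟨[], rfl⟩

/-- The label of the node of `t` at position `p`. -/
def labelAt (t : RTree Sig rank) (p : List ℕ) : Option Sig := (t.subtree p).map RTree.label

/-- The child number of a node: `0` for the root, and `j` for a `j`-th child (1-based). -/
def childNo (p : List ℕ) : ℕ :=
  match p.getLast? with
  | none => 0
  | some j => j + 1

/-!  ### First-order logic with k-ary transitive closure, on trees  -/

/-- First-order formulas over a ranked alphabet, with a `k`-ary transitive closure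
operator.  Variables are natural numbers.  `lab a x` means `x` has label `a`;
`edg i x y` means `y` is the `i`-th child of `x` (`i` is 1-based);
`le x y` means `x` is an ancestor of `y`; `tc xs ys φ us vs` is the transitive
closure `φ*` of `φ` with respect to the tuples of variables `xs`, `ys` (which it
binds), applied to the tuples of variables `us`, `vs`. -/
inductive TForm (Sig : Type) (rank : Sig → ℕ) (k : ℕ) : Type
  | lab (a : Sig) (x : ℕ)
  | edg (i : ℕ) (x y : ℕ)
  | le (x y : ℕ)
  | eq (x y : ℕ)
  | not (φ : TForm Sig rank k)
  | and (φ ψ : TForm Sig rank k)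
  | or (φ ψ : TForm Sig rank k)
  | ex (x : ℕ) (φ : TForm Sig rank k)
  | all (x : ℕ) (φ : TForm Sig rank k)
  | tc (xs ys : Fin k → ℕ) (φ : TForm Sig rank k) (us vs : Fin k → ℕ)

/-- Update a valuation on a tuple of variables simultaneously. -/
noncomputable def updVec {α : Type} {k : ℕ} (ν : ℕ → α) (xs : Fin k → ℕ) (a : Fin k → α) :
    ℕ → α :=
  fun n => if h : ∃ i, xs i = n then a h.choose else ν n

/-- Satisfaction of a formula in a tree `t` under a valuation of the variables by
nodes of `t`. -/
def Sat {k : ℕ} (t : RTree Sig rank) : TForm Sig rank k → (ℕ → Pos t) → Prop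
  | .lab a x, ν => labelAt t (ν x).1 = some a
  | .edg i x y, ν => 1 ≤ i ∧ (ν y).1 = (ν x).1 ++ [i - 1]
  | .le x y, ν => (ν x).1 <+: (ν y).1
  | .eq x y, ν => ν x = ν y
  | .not φ, ν => ¬ Sat t φ ν
  | .and φ ψ, ν => Sat t φ ν ∧ Sat t ψ ν
  | .or φ ψ, ν => Sat t φ ν ∨ Sat t ψ ν
  | .ex x φ, ν => ∃ u : Pos t, Sat t φ (Function.update ν x u)
  | .all x φ, ν => ∀ u : Pos t, Sat t φ (Function.update ν x u)
  | .tc xs ys φ us vs, ν =>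
      Relation.ReflTransGen
        (fun a b : Fin k → Pos t => Sat t φ (updVec (updVec ν xs a) ys b))
        (fun i => ν (us i)) (fun i => ν (vs i))

/-- The free variables of a formula. -/
def freeVars {k : ℕ} : TForm Sig rank k → Set ℕ
  | .lab _ x => {x}
  | .edg _ x y => {x, y}
  | .le x y => {x, y}
  | .eq x y => {x, y}
  | .not φ => freeVars φ
  | .and φ ψ => freeVars φ ∪ freeVars ψ
  | .or φ ψ => freeVars φ ∪ freeVars ψ
  | .ex x φ => freeVars φ \ {x}
  | .all x φ => freeVars φ \ {x}
  | .tc xs ys φ us vs =>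
      (freeVars φ \ (Set.range xs ∪ Set.range ys)) ∪ Set.range us ∪ Set.range vs

/-- Two `k`-tuples of variables consist of `2k` pairwise distinct variables. -/
def Distinct2 {k : ℕ} (xs ys : Fin k → ℕ) : Prop :=
  Function.Injective xs ∧ Function.Injective ys ∧ ∀ i j, xs i ≠ ys j

/-- `φ` is functional in the tuples of variables `xs`, `ys`: for every tree, every
valuation of the remaining variables, and every value of `xs`, there is at most one
value of `ys` satisfying `φ`. -/
def FunctionalIn {k : ℕ} (φ : TForm Sig rank k) (xs ys : Fin k → ℕ) : Prop :=
  ∀ (t : RTree Sig rank) (ν : ℕ → Pos t) (a b b' : Fin k → Pos t),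
    Sat t φ (updVec (updVec ν xs a) ys b) →
    Sat t φ (updVec (updVec ν xs a) ys b') → b = b'

/-- Well-formedness: in each transitive closure the `2k` bound variables are
pairwise distinct and occur free in the body. -/
def WF {k : ℕ} : TForm Sig rank k → Prop
  | .not φ => WF φ
  | .and φ ψ => WF φ ∧ WF ψ
  | .or φ ψ => WF φ ∧ WF ψ
  | .ex _ φ => WF φ
  | .all _ φ => WF φ
  | .tc xs ys φ _ _ =>
      Distinct2 xs ys ∧ (Set.range xs ∪ Set.range ys) ⊆ freeVars φ ∧ WF φ
  | _ => True

/-- All transitive closures occurring in the formula are deterministic, i.e., applied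
to functional formulas. -/
def DetTC {k : ℕ} : TForm Sig rank k → Prop
  | .not φ => DetTC φ
  | .and φ ψ => DetTC φ ∧ DetTC ψ
  | .or φ ψ => DetTC φ ∧ DetTC ψ
  | .ex _ φ => DetTC φ
  | .all _ φ => DetTC φ
  | .tc xs ys φ _ _ => FunctionalIn φ xs ys ∧ DetTC φ
  | _ => True

/-- All occurrences of transitive closure are positive (within the scope of an even
number of negations); the polarity parameter `b` is `true` for an even number. -/
def PosTC {k : ℕ} : Bool → TForm Sig rank k → Prop
  | b, .not φ => PosTC (!b) φ
  | b, .and φ ψ => PosTC b φ ∧ PosTC b ψ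
  | b, .or φ ψ => PosTC b φ ∧ PosTC b ψ
  | b, .ex _ φ => PosTC b φ
  | b, .all _ φ => PosTC b φ
  | b, .tc _ _ φ _ _ => b = true ∧ PosTC b φ
  | _, _ => True

/-- The formula contains no transitive closure operator (pure first-order). -/
def TCFree {k : ℕ} : TForm Sig rank k → Prop
  | .not φ => TCFree φ
  | .and φ ψ => TCFree φ ∧ TCFree ψ
  | .or φ ψ => TCFree φ ∧ TCFree ψ
  | .ex _ φ => TCFree φ
  | .all _ φ => TCFree φ
  | .tc _ _ _ _ _ => False
  | _ => True

/-- The tree language defined by a (closed) formula. -/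
def treesOf {k : ℕ} (φ : TForm Sig rank k) : Set (RTree Sig rank) :=
  {t | Sat t φ fun _ => rootPos t}

/-- `FO+DTC^k`: tree languages definable by closed first-order formulas with `k`-ary
deterministic transitive closure. -/
def FODTC (Sig : Type) (rank : Sig → ℕ) (k : ℕ) : Set (Set (RTree Sig rank)) :=
  {L | ∃ φ : TForm Sig rank k, WF φ ∧ DetTC φ ∧ freeVars φ = ∅ ∧ L = treesOf φ}

/-- `FO+TC^k`: tree languages definable by closed first-order formulas with `k`-ary
transitive closure. -/
def FOTC (Sig : Type) (rank : Sig → ℕ) (k : ℕ) : Set (Set (RTree Sig rank)) :=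
  {L | ∃ φ : TForm Sig rank k, WF φ ∧ freeVars φ = ∅ ∧ L = treesOf φ}

/-- `FO+posTC^k`: tree languages definable by closed first-order formulas in which
every occurrence of the `k`-ary transitive closure operator is positive. -/
def FOposTC (Sig : Type) (rank : Sig → ℕ) (k : ℕ) : Set (Set (RTree Sig rank)) :=
  {L | ∃ φ : TForm Sig rank k, WF φ ∧ PosTC true φ ∧ freeVars φ = ∅ ∧ L = treesOf φ}

/-!  ### k-head tree-walking automata with nested pebbles  -/

/-- Tests of a `k`-head tree-walking automaton with pebble set `X`:
label of the node under head `i`, presence of pebble `x` at head `i`, and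
child number of the node under head `i`. -/
inductive TTest (Sig : Type) (k : ℕ) (X : Type) : Type
  | lab (i : Fin k) (a : Sig)
  | peb (i : Fin k) (x : X)
  | chno (i : Fin k) (j : ℕ)

/-- Instructions: move head `i` up / down to the `j`-th child (1-based), drop a
pebble at head `i`, retrieve the most recently dropped pebble (from a distance),
or perform a positive (`b = true`) or negated (`b = false`) test. -/
inductive TInstr (Sig : Type) (k : ℕ) (X : Type) : Type
  | up (i : Fin k)
  | down (i : Fin k) (j : ℕ)
  | dropPeb (i : Fin k) (x : X)
  | retrieve (x : X)
  | test (b : Bool) (τ : TTest Sig k X)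

/-- A `k`-head tree-walking automaton with nested pebbles: a finite state set `Q`,
a finite pebble set `X`, an initial state, accepting states, and a finite set of
instructions `⟨p, χ, q⟩`. -/
structure TWA (Sig : Type) (rank : Sig → ℕ) (k : ℕ) : Type 1 where
  Q : Type
  finQ : Fintype Q
  X : Type
  finX : Fintype X
  q0 : Q
  acc : Set Q
  instr : Set (Q × TInstr Sig k X × Q)
  instrFin : instr.Finite

/-- Configurations: a state, the positions of the `k` heads, and the stack of
dropped pebbles with their positions (most recent first). -/
abbrev TConf {Sig : Type} {rank : Sig → ℕ} {k : ℕ} (A : TWA Sig rank k)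
    (t : RTree Sig rank) : Type :=
  A.Q × (Fin k → Pos t) × List (A.X × Pos t)

/-- Semantics of tests. -/
def testHolds {k : ℕ} (t : RTree Sig rank) {X : Type} (τ : TTest Sig k X)
    (hs : Fin k → Pos t) (π : List (X × Pos t)) : Prop :=
  match τ with
  | .lab i a => labelAt t (hs i).1 = some a
  | .peb i x => (x, hs i) ∈ π
  | .chno i j => childNo (hs i).1 = j

/-- Semantics of a single instruction, relating head positions and pebble stacks
before and after. -/
def instrStep {k : ℕ} (t : RTree Sig rank) {X : Type} (ins : TInstr Sig k X)
    (hs : Fin k → Pos t) (π : List (X × Pos t))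
    (hs' : Fin k → Pos t) (π' : List (X × Pos t)) : Prop :=
  match ins with
  | .up i => π' = π ∧ (∃ j : ℕ, (hs i).1 = (hs' i).1 ++ [j]) ∧ ∀ h, h ≠ i → hs' h = hs h
  | .down i j => π' = π ∧ 1 ≤ j ∧ (hs' i).1 = (hs i).1 ++ [j - 1] ∧ ∀ h, h ≠ i → hs' h = hs h
  | .dropPeb i x => hs' = hs ∧ π' = (x, hs i) :: π ∧ ∀ w, (x, w) ∉ π
  | .retrieve x => hs' = hs ∧ ∃ w, π = (x, w) :: π'
  | .test b τ => hs' = hs ∧ π' = π ∧ (testHolds t τ hs π ↔ b = true)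

/-- The step relation of automaton `A` on tree `t`. -/
def Step {k : ℕ} (A : TWA Sig rank k) (t : RTree Sig rank) :
    TConf A t → TConf A t → Prop :=
  fun c c' => ∃ ins : TInstr Sig k A.X,
    (c.1, ins, c'.1) ∈ A.instr ∧ instrStep t ins c.2.1 c.2.2 c'.2.1 c'.2.2

/-- `χ'` is the negation of the test `χ`. -/
def negOf {k : ℕ} {X : Type} (χ χ' : TInstr Sig k X) : Prop :=
  ∃ b τ, χ = TInstr.test b τ ∧ χ' = TInstr.test (!b) τ

/-- Determinism: any two distinct instructions with the same source state consist
of a test and its negation. -/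
def Deterministic {k : ℕ} (A : TWA Sig rank k) : Prop :=
  ∀ p χ₁ q₁ χ₂ q₂, (p, χ₁, q₁) ∈ A.instr → (p, χ₂, q₂) ∈ A.instr →
    (χ₁, q₁) ≠ (χ₂, q₂) → negOf χ₁ χ₂ ∨ negOf χ₂ χ₁

/-- The initial configuration: initial state, all heads at the root, no pebbles. -/
def initConf {k : ℕ} (A : TWA Sig rank k) (t : RTree Sig rank) : TConf A t :=
  (A.q0, fun _ => rootPos t, [])

/-- A configuration is halting if no step is possible from it. -/
def HaltingConf {k : ℕ} (A : TWA Sig rank k) (t : RTree Sig rank) (c : TConf A t) : Prop :=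
  ∀ c', ¬ Step A t c c'

/-- Acceptance: some computation from the initial configuration halts in an
accepting state with all heads at the root and no pebbles on the tree. -/
def Accepts {k : ℕ} (A : TWA Sig rank k) (t : RTree Sig rank) : Prop :=
  ∃ q ∈ A.acc,
    Relation.ReflTransGen (Step A t) (initConf A t) (q, fun _ => rootPos t, []) ∧
    HaltingConf A t (q, fun _ => rootPos t, [])

/-- The tree language accepted by `A`. -/
def Lang {k : ℕ} (A : TWA Sig rank k) : Set (RTree Sig rank) := {t | Accepts A t}

/-- The automaton uses no pebbles at all. -/
def PebbleFree {k : ℕ} (A : TWA Sig rank k) : Prop :=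
  ∀ p χ q, (p, χ, q) ∈ A.instr →
    (∀ i x, χ ≠ TInstr.dropPeb i x) ∧ (∀ x, χ ≠ TInstr.retrieve x) ∧
    (∀ b i x, χ ≠ TInstr.test b (TTest.peb i x))

/-- `DPTWA^k`: tree languages accepted by deterministic `k`-head tree-walking
automata with nested pebbles. -/
def DPTWA (Sig : Type) (rank : Sig → ℕ) (k : ℕ) : Set (Set (RTree Sig rank)) :=
  {L | ∃ A : TWA Sig rank k, Deterministic A ∧ L = Lang A}

/-- `NPTWA^k`: tree languages accepted by nondeterministic `k`-head tree-walking
automata with nested pebbles. -/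
def NPTWA (Sig : Type) (rank : Sig → ℕ) (k : ℕ) : Set (Set (RTree Sig rank)) :=
  {L | ∃ A : TWA Sig rank k, L = Lang A}

/-- `NTWA^k`: tree languages accepted by nondeterministic `k`-head tree-walking
automata without pebbles. -/
def NTWA (Sig : Type) (rank : Sig → ℕ) (k : ℕ) : Set (Set (RTree Sig rank)) :=
  {L | ∃ A : TWA Sig rank k, PebbleFree A ∧ L = Lang A}

end NestedPebbles

namespace NestedPebbles

variable {Sig : Type} {rank : Sig → ℕ} {k : ℕ}

/-- One step of the matrix `Φ` of formulas: from state `p` with head tuple `a` to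
state `q` with head tuple `b`, provided `φ_{p,q}(a,b)` holds (the remaining free
variables being valuated by `ν`). -/
def MStep {Q : Type} (Φ : Q → Q → TForm Sig rank k) (xs ys : Fin k → ℕ)
    (t : RTree Sig rank) (ν : ℕ → Pos t) :
    Q × (Fin k → Pos t) → Q × (Fin k → Pos t) → Prop :=
  fun c c' => Sat t (Φ c.1 c'.1) (updVec (updVec ν xs c.2) ys c'.2)

/-- The computation closure `Φ^#` of the matrix `Φ`, as a semantic relation:
`φ^#_{p,q}(ā,b̄)` holds iff there is a nonempty `Φ`-path from `(p,ā)` to `(q,b̄)`. -/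
def CompClosure {Q : Type} (Φ : Q → Q → TForm Sig rank k) (xs ys : Fin k → ℕ)
    (t : RTree Sig rank) (ν : ℕ → Pos t) (p q : Q) (a b : Fin k → Pos t) : Prop :=
  Relation.TransGen (MStep Φ xs ys t ν) (p, a) (q, b)

/-- The matrix `Φ` is deterministic: its entries are jointly functional and
exclusive. -/
def DetMatrix {Q : Type} (Φ : Q → Q → TForm Sig rank k) (xs ys : Fin k → ℕ) : Prop :=
  ∀ (t : RTree Sig rank) (ν : ℕ → Pos t) (p q q' : Q) (a b b' : Fin k → Pos t),
    Sat t (Φ p q) (updVec (updVec ν xs a) ys b) →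
    Sat t (Φ p q') (updVec (updVec ν xs a) ys b') → q = q' ∧ b = b'

/-- `q` is a final state of the matrix `Φ`: all entries `φ_{q,r}` are false. -/
def FinalState {Q : Type} (Φ : Q → Q → TForm Sig rank k) (xs ys : Fin k → ℕ)
    (q : Q) : Prop :=
  ∀ (r : Q) (t : RTree Sig rank) (ν : ℕ → Pos t) (a b : Fin k → Pos t),
    ¬ Sat t (Φ q r) (updVec (updVec ν xs a) ys b)

/-- `q` is a final state of the computation closure `Φ^#`: all entries
`φ^#_{q,r}` are false. -/
def FinalForClosure {Q : Type} (Φ : Q → Q → TForm Sig rank k) (xs ys : Fin k → ℕ)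
    (q : Q) : Prop :=
  ∀ (r : Q) (t : RTree Sig rank) (ν : ℕ → Pos t) (a b : Fin k → Pos t),
    ¬ CompClosure Φ xs ys t ν q r a b

end NestedPebbles

namespace NestedPebbles

/-!
Kleene's state elimination. For a list `l` of states let `ψˡ_{p,q}` express the `Φ`-paths from
`p` to `q` with all intermediate states in `l`, so that `ψ^[] = Φ`. A path that may also pass
through `r` is either a `ψˡ`-path, or a `ψˡ`-path into `r`, a sequence of `ψˡ`-loops at `r` and a
`ψˡ`-path out of `r`; the loops form a `k`-ary transitive closure over the head tuples, with fresh
tuples of variables holding the heads where the path enters and leaves the loops. If `Φ` is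
deterministic, a `ψˡ`-loop at `r ∉ l` ends at the first return to `r`, so its formula is
functional and the transitive closure is deterministic.
-/

variable {Sig : Type} {rank : Sig → ℕ} {k : ℕ}

section Valuations

variable {α : Type} {ν ν' : ℕ → α} {v w : Fin k → ℕ} {a b : Fin k → α} {n : ℕ}

theorem updVec_of_notMem (h : n ∉ Set.range v) : updVec ν v b n = ν n := dif_neg h

theorem updVec_apply (hv : Function.Injective v) (i : Fin k) : updVec ν v b (v i) = b i := by
  have h : ∃ j, v j = v i := ⟨i, rfl⟩
  unfold updVec
  rw [dif_pos h, hv h.choose_spec]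

theorem updVec_comp_self (hv : Function.Injective v) : (fun i => updVec ν v b (v i)) = b :=
  funext (updVec_apply hv)

theorem updVec_comp_of_disjoint (h : ∀ i j, v i ≠ w j) :
    (fun j => updVec ν v b (w j)) = fun j => ν (w j) :=
  funext fun j => updVec_of_notMem fun ⟨i, hi⟩ => h i j hi

theorem updVec_comp_apply_of_mem (μ : ℕ → α) (h : n ∈ Set.range v) :
    updVec μ v (fun i => ν (v i)) n = ν n := by
  have h' : ∃ i, v i = n := h
  unfold updVec
  rw [dif_pos h']
  exact congrArg ν h'.choose_spec

theorem updVec_comp_eq (h : ∀ n ∉ Set.range v, ν' n = ν n) :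
    updVec ν v (fun i => ν' (v i)) = ν' := by
  funext n
  by_cases hn : n ∈ Set.range v
  · exact updVec_comp_apply_of_mem ν hn
  · rw [updVec_of_notMem hn, h n hn]

theorem eqOn_updVec {s : Set ℕ} (h : Disjoint (Set.range v) s) :
    Set.EqOn (updVec ν v b) ν s :=
  fun _ hn => updVec_of_notMem (Set.disjoint_right.mp h hn)

theorem updVec_eqOn_updVec {s : Set ℕ} (h : Set.EqOn ν ν' (s \ Set.range v)) :
    Set.EqOn (updVec ν v b) (updVec ν' v b) s := by
  intro n hn
  by_cases hv : n ∈ Set.range v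
  · have hv' : ∃ i, v i = n := hv
    unfold updVec
    rw [dif_pos hv', dif_pos hv']
  · rw [updVec_of_notMem hv, updVec_of_notMem hv]
    exact h ⟨hn, hv⟩

theorem update_eqOn_update {s : Set ℕ} {x : ℕ} (u : α) (h : Set.EqOn ν ν' (s \ {x})) :
    Set.EqOn (Function.update ν x u) (Function.update ν' x u) s := by
  intro n hn
  by_cases hx : n = x
  · simp [hx]
  · rw [Function.update_of_ne hx, Function.update_of_ne hx]
    exact h ⟨hn, hx⟩

theorem updVec_updVec_comp_left {xs ys : Fin k → ℕ} (hdist : Distinct2 xs ys) :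
    (fun i => updVec (updVec ν xs a) ys b (xs i)) = a := by
  rw [updVec_comp_of_disjoint fun i j => (hdist.2.2 j i).symm, updVec_comp_self hdist.1]

theorem updVec_updVec_comp_right {xs ys : Fin k → ℕ} (hdist : Distinct2 xs ys) :
    (fun i => updVec (updVec ν xs a) ys b (ys i)) = b :=
  updVec_comp_self hdist.2.1

end Valuations

theorem sat_congr {t : RTree Sig rank} {φ : TForm Sig rank k} {ν ν' : ℕ → Pos t}
    (h : Set.EqOn ν ν' (freeVars φ)) : Sat t φ ν ↔ Sat t φ ν' := by
  induction φ generalizing ν ν' with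
  | lab a x => simp only [Sat, h (show x ∈ freeVars (.lab a x : TForm Sig rank k) from rfl)]
  | edg i x y | le x y | eq x y =>
    simp only [Sat, h (Or.inl rfl : x ∈ ({x, y} : Set ℕ)),
      h (Or.inr rfl : y ∈ ({x, y} : Set ℕ))]
  | not φ ih => exact not_congr (ih h)
  | and φ ψ ih₁ ih₂ =>
    exact and_congr (ih₁ (h.mono Set.subset_union_left)) (ih₂ (h.mono Set.subset_union_right))
  | or φ ψ ih₁ ih₂ =>
    exact or_congr (ih₁ (h.mono Set.subset_union_left)) (ih₂ (h.mono Set.subset_union_right))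
  | ex x φ ih => exact exists_congr fun u => ih (update_eqOn_update u h)
  | all x φ ih => exact forall_congr' fun u => ih (update_eqOn_update u h)
  | tc xs ys φ us vs ih =>
    have hus : (fun i => ν (us i)) = fun i => ν' (us i) :=
      funext fun i => h (Or.inl (Or.inr ⟨i, rfl⟩))
    have hvs : (fun i => ν (vs i)) = fun i => ν' (vs i) :=
      funext fun i => h (Or.inr ⟨i, rfl⟩)
    have hstep : (fun a b : Fin k → Pos t => Sat t φ (updVec (updVec ν xs a) ys b)) =
        fun a b => Sat t φ (updVec (updVec ν' xs a) ys b) := by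
      refine funext₂ fun a b => propext (ih (updVec_eqOn_updVec (updVec_eqOn_updVec ?_)))
      exact h.mono fun n ⟨⟨hn, hy⟩, hx⟩ =>
        Or.inl (Or.inl ⟨hn, by rintro (h | h) <;> contradiction⟩)
    simp only [Sat, hus, hvs, hstep]

theorem sat_and {t : RTree Sig rank} {φ ψ : TForm Sig rank k} {ν : ℕ → Pos t} :
    Sat t (.and φ ψ) ν ↔ Sat t φ ν ∧ Sat t ψ ν :=
  Iff.rfl

section Tuples

def exVec (v : Fin k → ℕ) (χ : TForm Sig rank k) : TForm Sig rank k :=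
  (List.finRange k).foldr (fun i => .ex (v i)) χ

/-- `.eq 0 0` is the empty conjunction. -/
def eqVec (u v : Fin k → ℕ) : TForm Sig rank k :=
  (List.finRange k).foldr (fun i => .and (.eq (u i) (v i))) (.eq 0 0)

variable {v u : Fin k → ℕ} {χ : TForm Sig rank k}

theorem wf_exVec (h : WF χ) : WF (exVec v χ) := by
  unfold exVec
  induction List.finRange k with
  | nil => exact h
  | cons _ _ ih => exact ih

theorem detTC_exVec (h : DetTC χ) : DetTC (exVec v χ) := by
  unfold exVec
  induction List.finRange k with
  | nil => exact h
  | cons _ _ ih => exact ih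

theorem wf_eqVec : WF (eqVec u v : TForm Sig rank k) := by
  unfold eqVec
  induction List.finRange k with
  | nil => trivial
  | cons _ _ ih => exact ⟨trivial, ih⟩

theorem detTC_eqVec : DetTC (eqVec u v : TForm Sig rank k) := by
  unfold eqVec
  induction List.finRange k with
  | nil => trivial
  | cons _ _ ih => exact ⟨trivial, ih⟩

theorem range_subset_freeVars_eqVec : Set.range u ⊆ freeVars (eqVec u v : TForm Sig rank k) := by
  rintro _ ⟨i, rfl⟩
  suffices ∀ l : List (Fin k), i ∈ l →
      u i ∈ freeVars (l.foldr (fun i => .and (.eq (u i) (v i))) (.eq 0 0) : TForm Sig rank k) from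
    this _ (List.mem_finRange i)
  intro l
  induction l with
  | nil => exact fun h => absurd h List.not_mem_nil
  | cons j l ih =>
    rintro (_ | ⟨_, h⟩)
    exacts [Or.inl (Or.inl rfl), Or.inr (ih h)]

theorem sat_eqVec {t : RTree Sig rank} (ν : ℕ → Pos t) :
    Sat t (eqVec u v) ν ↔ (fun i => ν (u i)) = fun i => ν (v i) := by
  suffices ∀ l : List (Fin k),
      Sat t (l.foldr (fun i => .and (.eq (u i) (v i))) (.eq 0 0)) ν ↔
        ∀ i ∈ l, ν (u i) = ν (v i) by
    rw [eqVec, this, funext_iff]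
    simp
  intro l
  induction l with
  | nil => simp [Sat]
  | cons i l ih => simp [Sat, ih]

theorem sat_foldr_ex {t : RTree Sig rank} (l : List (Fin k)) (ν : ℕ → Pos t) :
    Sat t (l.foldr (fun i => .ex (v i)) χ) ν ↔
      ∃ ν' : ℕ → Pos t, (∀ n, (∀ i ∈ l, v i ≠ n) → ν' n = ν n) ∧
        Sat t χ ν' := by
  induction l generalizing ν with
  | nil =>
    refine ⟨fun h => ⟨ν, fun _ _ => rfl, h⟩, ?_⟩
    rintro ⟨ν', hν', hχ⟩
    rwa [funext fun n => hν' n fun _ h => absurd h List.not_mem_nil] at hχ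
  | cons i l ih =>
    simp only [List.foldr_cons, Sat, ih, List.mem_cons, forall_eq_or_imp]
    constructor
    · rintro ⟨x, ν', hν', hχ⟩
      exact ⟨ν', fun n ⟨hin, hln⟩ => (hν' n hln).trans (Function.update_of_ne hin.symm _ _),
        hχ⟩
    · rintro ⟨ν', hν', hχ⟩
      refine ⟨ν' (v i), ν', fun n hn => ?_, hχ⟩
      by_cases hin : v i = n
      · subst hin; simp
      · rw [Function.update_of_ne (Ne.symm hin)]
        exact hν' n ⟨hin, hn⟩

theorem sat_exVec {t : RTree Sig rank} (ν : ℕ → Pos t) :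
    Sat t (exVec v χ) ν ↔ ∃ b : Fin k → Pos t, Sat t χ (updVec ν v b) := by
  rw [exVec, sat_foldr_ex]
  constructor
  · rintro ⟨ν', hν', hχ⟩
    refine ⟨fun i => ν' (v i), ?_⟩
    rwa [updVec_comp_eq fun n hn => hν' n fun i _ hi => hn ⟨i, hi⟩]
  · rintro ⟨b, hχ⟩
    exact ⟨_, fun n hn => updVec_of_notMem fun ⟨i, hi⟩ => hn i (List.mem_finRange i) hi,
      hχ⟩

end Tuples

section PathThrough

variable {Q T : Type} {R : Q × T → Q × T → Prop} {S : Set Q} {c d : Q × T}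

def PathThrough (R : Q × T → Q × T → Prop) (S : Set Q) (c d : Q × T) : Prop :=
  ∃ e, Relation.ReflTransGen (fun x y => R x y ∧ y.1 ∈ S) c e ∧ R e d

def kleeneRel (R : Q × T → Q × T → Prop) (r : Q) (c d : Q × T) : Prop :=
  R c d ∨ ∃ u w : T, R c (r, u) ∧
    Relation.ReflTransGen (fun a b => R (r, a) (r, b)) u w ∧ R (r, w) d

theorem PathThrough.of_rel (h : R c d) : PathThrough R S c d :=
  ⟨c, .refl, h⟩

theorem PathThrough.mono {S' : Set Q} (hS : S ⊆ S') (h : PathThrough R S c d) :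
    PathThrough R S' c d :=
  let ⟨e, hce, hed⟩ := h
  ⟨e, Relation.ReflTransGen.mono (fun _ _ hxy => ⟨hxy.1, hS hxy.2⟩) _ _ hce, hed⟩

theorem PathThrough.head {x : Q × T} (hcx : R c x) (hx : x.1 ∈ S) (h : PathThrough R S x d) :
    PathThrough R S c d :=
  let ⟨e, hxe, hed⟩ := h
  ⟨e, .head ⟨hcx, hx⟩ hxe, hed⟩

theorem PathThrough.trans {m : Q × T} (h₁ : PathThrough R S c m) (hm : m.1 ∈ S)
    (h₂ : PathThrough R S m d) : PathThrough R S c d :=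
  let ⟨_, hce₁, he₁m⟩ := h₁
  let ⟨e₂, hme₂, he₂d⟩ := h₂
  ⟨e₂, (hce₁.tail ⟨he₁m, hm⟩).trans hme₂, he₂d⟩

theorem pathThrough_empty : PathThrough R ∅ c d ↔ R c d := by
  refine ⟨fun ⟨e, hce, hed⟩ => ?_, PathThrough.of_rel⟩
  rcases hce.cases_head with rfl | ⟨x, ⟨_, hx⟩, _⟩
  exacts [hed, absurd hx (Set.notMem_empty _)]

theorem pathThrough_univ : PathThrough R Set.univ c d ↔ Relation.TransGen R c d := by
  rw [Relation.TransGen.tail'_iff]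
  exact ⟨fun ⟨e, hce, hed⟩ =>
      ⟨e, Relation.ReflTransGen.mono (fun _ _ h => h.1) _ _ hce, hed⟩,
    fun ⟨e, hce, hed⟩ =>
      ⟨e, Relation.ReflTransGen.mono (fun _ _ h => ⟨h, trivial⟩) _ _ hce, hed⟩⟩

theorem pathThrough_insert {r : Q} :
    PathThrough R (insert r S) c d ↔ kleeneRel (PathThrough R S) r c d := by
  constructor
  · rintro ⟨e, hce, hed⟩
    induction hce using Relation.ReflTransGen.head_induction_on with
    | refl => exact Or.inl (.of_rel hed)
    | @head c x hcx _ ih =>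
      obtain ⟨hcx, rfl | hxS⟩ := hcx
      · refine Or.inr ?_
        rcases ih with hxd | ⟨u, w, hxu, huw, hwd⟩
        · exact ⟨x.2, x.2, .of_rel hcx, .refl, hxd⟩
        · exact ⟨x.2, w, .of_rel hcx, .head hxu huw, hwd⟩
      · rcases ih with hxd | ⟨u, w, hxu, huw, hwd⟩
        · exact Or.inl (.head hcx hxS hxd)
        · exact Or.inr ⟨u, w, .head hcx hxS hxu, huw, hwd⟩
  · have hS : S ⊆ insert r S := Set.subset_insert r S
    rintro (h | ⟨u, w, hcu, huw, hwd⟩)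
    · exact h.mono hS
    · have hcw : PathThrough R (insert r S) c (r, w) := by
        clear hwd
        induction huw with
        | refl => exact hcu.mono hS
        | tail _ hK ih => exact ih.trans (Set.mem_insert r S) (hK.mono hS)
      exact hcw.trans (Set.mem_insert r S) (hwd.mono hS)

theorem PathThrough.unique (hR : Relator.RightUnique R) {d' : Q × T}
    (h : PathThrough R S c d) (h' : PathThrough R S c d') (hd : d.1 ∉ S) (hd' : d'.1 ∉ S) :
    d = d' := by
  obtain ⟨e, hce, hed⟩ := h
  obtain ⟨e', hce', he'd'⟩ := h'
  induction hce using Relation.ReflTransGen.head_induction_on with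
  | refl =>
    rcases hce'.cases_head with rfl | ⟨x, ⟨hcx, hxS⟩, _⟩
    · exact hR hed he'd'
    · exact absurd (hR hed hcx ▸ hxS) hd
  | head hcx _ ih =>
    obtain ⟨hcx, hxS⟩ := hcx
    rcases hce'.cases_head with rfl | ⟨x', ⟨hcx', _⟩, hx'e'⟩
    · exact absurd (hR he'd' hcx ▸ hxS) hd'
    · exact ih (hR hcx hcx' ▸ hx'e')

end PathThrough

section FreshVariables

def tupleBound (v : Fin k → ℕ) : ℕ := Finset.univ.sup fun i => v i + 1

theorem lt_tupleBound (v : Fin k → ℕ) (i : Fin k) : v i < tupleBound v :=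
  Nat.lt_of_succ_le (Finset.le_sup (f := fun i => v i + 1) (Finset.mem_univ i))

def fvBound : TForm Sig rank k → ℕ
  | .lab _ x => x + 1
  | .edg _ x y | .le x y | .eq x y => max x y + 1
  | .not φ | .ex _ φ | .all _ φ => fvBound φ
  | .and φ ψ | .or φ ψ => max (fvBound φ) (fvBound ψ)
  | .tc _ _ φ us vs => max (fvBound φ) (max (tupleBound us) (tupleBound vs))

theorem lt_fvBound {φ : TForm Sig rank k} {n : ℕ} (h : n ∈ freeVars φ) : n < fvBound φ := by
  induction φ with
  | tc _ _ φ us vs ih =>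
    rcases h with (⟨h, -⟩ | ⟨i, rfl⟩) | ⟨i, rfl⟩
    · exact lt_max_of_lt_left (ih h)
    · exact lt_max_of_lt_right (lt_max_of_lt_left (lt_tupleBound us i))
    · exact lt_max_of_lt_right (lt_max_of_lt_right (lt_tupleBound vs i))
  | and φ ψ ih₁ ih₂ | or φ ψ ih₁ ih₂ =>
    exact h.elim (fun h => lt_max_of_lt_left (ih₁ h)) fun h => lt_max_of_lt_right (ih₂ h)
  | _ => simp_all [freeVars, fvBound] <;> omega

end FreshVariables

section KleeneConstruction

variable {Q : Type} (Φ : Q → Q → TForm Sig rank k) (xs ys : Fin k → ℕ)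

def params : Set ℕ := (⋃ p, ⋃ q, freeVars (Φ p q)) \ (Set.range xs ∪ Set.range ys)

theorem disjoint_range_xs_params : Disjoint (Set.range xs) (params Φ xs ys) :=
  Set.disjoint_right.mpr fun _ h hx => h.2 (Or.inl hx)

theorem disjoint_range_ys_params : Disjoint (Set.range ys) (params Φ xs ys) :=
  Set.disjoint_right.mpr fun _ h hy => h.2 (Or.inr hy)

/-- `χ p q` defines `R (p, ā) (q, b̄)`, with `ā`, `b̄` the values of `xs`, `ys`, as long as the
parameters of `Φ` keep their values under `ν₀`. -/
def Defines {t : RTree Sig rank} (ν₀ : ℕ → Pos t) (χ : Q → Q → TForm Sig rank k)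
    (R : Q × (Fin k → Pos t) → Q × (Fin k → Pos t) → Prop) : Prop :=
  ∀ p q (ν : ℕ → Pos t), Set.EqOn ν ν₀ (params Φ xs ys) →
    (Sat t (χ p q) ν ↔ R (p, fun i => ν (xs i)) (q, fun i => ν (ys i)))

variable {Φ xs ys} {t : RTree Sig rank} {ν₀ ν : ℕ → Pos t}
  {χ : Q → Q → TForm Sig rank k}
  {R : Q × (Fin k → Pos t) → Q × (Fin k → Pos t) → Prop}

theorem defines_mStep : Defines Φ xs ys ν₀ Φ (MStep Φ xs ys t ν₀) := by
  intro p q ν hν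
  show _ ↔ Sat t (Φ p q) (updVec (updVec ν₀ xs fun i => ν (xs i)) ys fun i => ν (ys i))
  refine sat_congr fun n hn => ?_
  by_cases hy : n ∈ Set.range ys
  · exact (updVec_comp_apply_of_mem _ hy).symm
  rw [updVec_of_notMem hy]
  by_cases hx : n ∈ Set.range xs
  · exact (updVec_comp_apply_of_mem _ hx).symm
  rw [updVec_of_notMem hx]
  exact hν ⟨Set.mem_iUnion₂.mpr ⟨p, q, hn⟩, fun h => h.elim hx hy⟩

theorem Defines.sat_exVec_ys (h : Defines Φ xs ys ν₀ χ R) (hdist : Distinct2 xs ys)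
    {v : Fin k → ℕ} (hv : ∀ i j, ys i ≠ v j) (hν : Set.EqOn ν ν₀ (params Φ xs ys))
    (p q : Q) :
    Sat t (exVec ys (.and (χ p q) (eqVec ys v))) ν ↔
      R (p, fun i => ν (xs i)) (q, fun i => ν (v i)) := by
  simp only [sat_exVec, sat_and, sat_eqVec, updVec_comp_self hdist.2.1, updVec_comp_of_disjoint hv]
  rw [exists_eq_right, h p q _ ((eqOn_updVec (disjoint_range_ys_params Φ xs ys)).trans hν),
    updVec_comp_self hdist.2.1, updVec_comp_of_disjoint fun i j => (hdist.2.2 j i).symm]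

theorem Defines.sat_exVec_xs (h : Defines Φ xs ys ν₀ χ R) (hdist : Distinct2 xs ys)
    {v : Fin k → ℕ} (hv : ∀ i j, xs i ≠ v j) (hν : Set.EqOn ν ν₀ (params Φ xs ys))
    (p q : Q) :
    Sat t (exVec xs (.and (χ p q) (eqVec xs v))) ν ↔
      R (p, fun i => ν (v i)) (q, fun i => ν (ys i)) := by
  simp only [sat_exVec, sat_and, sat_eqVec, updVec_comp_self hdist.1, updVec_comp_of_disjoint hv]
  rw [exists_eq_right, h p q _ ((eqOn_updVec (disjoint_range_xs_params Φ xs ys)).trans hν),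
    updVec_comp_self hdist.1, updVec_comp_of_disjoint hdist.2.2]

theorem Defines.sat_tc (h : Defines Φ xs ys ν₀ χ R) (hdist : Distinct2 xs ys)
    (hν : Set.EqOn ν ν₀ (params Φ xs ys)) (r : Q) (v w : Fin k → ℕ) :
    Sat t (.tc xs ys (.and (χ r r) (.and (eqVec xs xs) (eqVec ys ys))) v w) ν ↔
      Relation.ReflTransGen (fun a b => R (r, a) (r, b))
        (fun i => ν (v i)) (fun i => ν (w i)) := by
  have hstep : ∀ a b, Sat t (.and (χ r r) (.and (eqVec xs xs) (eqVec ys ys)))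
      (updVec (updVec ν xs a) ys b) ↔ R (r, a) (r, b) := fun a b => by
    rw [sat_and, sat_and, sat_eqVec, sat_eqVec, and_iff_left ⟨rfl, rfl⟩,
      h r r _ (((eqOn_updVec (disjoint_range_ys_params Φ xs ys)).trans
        (eqOn_updVec (disjoint_range_xs_params Φ xs ys))).trans hν),
      updVec_updVec_comp_left hdist, updVec_updVec_comp_right hdist]
  show Relation.ReflTransGen (fun a b => Sat t _ (updVec (updVec ν xs a) ys b)) _ _ ↔ _
  simp only [hstep]

variable [Fintype Q] (Φ xs ys)

def freshN : ℕ :=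
  max (Finset.univ.sup fun pq : Q × Q => fvBound (Φ pq.1 pq.2))
    (max (tupleBound xs) (tupleBound ys))

def entryVars : Fin k → ℕ := fun i => freshN Φ xs ys + i

def exitVars : Fin k → ℕ := fun i => freshN Φ xs ys + k + i

/-- The tautologies `eqVec xs xs` and `eqVec ys ys` make all of `xs`, `ys` free in the loop body,
as `WF` demands. -/
def kleeneForm (χ : Q → Q → TForm Sig rank k) (r p q : Q) : TForm Sig rank k :=
  .or (χ p q) <| exVec (entryVars Φ xs ys) <| exVec (exitVars Φ xs ys) <|
    .and (exVec ys (.and (χ p r) (eqVec ys (entryVars Φ xs ys))))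
      (.and (.tc xs ys (.and (χ r r) (.and (eqVec xs xs) (eqVec ys ys)))
          (entryVars Φ xs ys) (exitVars Φ xs ys))
        (exVec xs (.and (χ r q) (eqVec xs (exitVars Φ xs ys)))))

def pathFormula : List Q → Q → Q → TForm Sig rank k
  | [] => Φ
  | r :: l => kleeneForm Φ xs ys (pathFormula l) r

theorem xs_lt_freshN (i : Fin k) : xs i < freshN Φ xs ys :=
  lt_max_of_lt_right (lt_max_of_lt_left (lt_tupleBound xs i))

theorem ys_lt_freshN (i : Fin k) : ys i < freshN Φ xs ys :=
  lt_max_of_lt_right (lt_max_of_lt_right (lt_tupleBound ys i))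

theorem lt_freshN_of_mem_params {n : ℕ} (h : n ∈ params Φ xs ys) : n < freshN Φ xs ys := by
  obtain ⟨p, q, hn⟩ := Set.mem_iUnion₂.mp h.1
  exact lt_max_of_lt_left ((lt_fvBound hn).trans_le
    (Finset.le_sup (f := fun pq : Q × Q => fvBound (Φ pq.1 pq.2)) (Finset.mem_univ (p, q))))

theorem disjoint_params_of_freshN_le {v : Fin k → ℕ} (hv : ∀ i, freshN Φ xs ys ≤ v i) :
    Disjoint (Set.range v) (params Φ xs ys) :=
  Set.disjoint_right.mpr fun _ hn ⟨i, hi⟩ =>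
    (hv i).not_gt (hi ▸ lt_freshN_of_mem_params Φ xs ys hn)

theorem freshN_le_entryVars (i : Fin k) : freshN Φ xs ys ≤ entryVars Φ xs ys i :=
  Nat.le_add_right _ _

theorem freshN_le_exitVars (i : Fin k) : freshN Φ xs ys ≤ exitVars Φ xs ys i := by
  simp only [exitVars]; omega

theorem ne_of_lt_freshN {v w : Fin k → ℕ} (hv : ∀ i, v i < freshN Φ xs ys)
    (hw : ∀ j, freshN Φ xs ys ≤ w j) (i j : Fin k) : v i ≠ w j :=
  ((hv i).trans_le (hw j)).ne

theorem exitVars_ne_entryVars (i j : Fin k) : exitVars Φ xs ys i ≠ entryVars Φ xs ys j := by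
  simp only [entryVars, exitVars]; omega

theorem entryVars_injective : Function.Injective (entryVars Φ xs ys) := fun i j h =>
  Fin.ext (by simp only [entryVars] at h; omega)

theorem exitVars_injective : Function.Injective (exitVars Φ xs ys) := fun i j h =>
  Fin.ext (by simp only [exitVars] at h; omega)

variable {Φ xs ys}

theorem Defines.kleeneForm (h : Defines Φ xs ys ν₀ χ R) (hdist : Distinct2 xs ys) (r : Q) :
    Defines Φ xs ys ν₀ (kleeneForm Φ xs ys χ r) (kleeneRel R r) := by
  intro p q ν hν
  refine or_congr (h p q ν hν) ?_
  rw [sat_exVec]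
  refine exists_congr fun u => ?_
  rw [sat_exVec]
  refine exists_congr fun w => ?_
  have hxz := ne_of_lt_freshN Φ xs ys (xs_lt_freshN Φ xs ys) (freshN_le_entryVars Φ xs ys)
  have hyz := ne_of_lt_freshN Φ xs ys (ys_lt_freshN Φ xs ys) (freshN_le_entryVars Φ xs ys)
  have hxw := ne_of_lt_freshN Φ xs ys (xs_lt_freshN Φ xs ys) (freshN_le_exitVars Φ xs ys)
  have hyw := ne_of_lt_freshN Φ xs ys (ys_lt_freshN Φ xs ys) (freshN_le_exitVars Φ xs ys)
  have hν' : Set.EqOn (updVec (updVec ν (entryVars Φ xs ys) u) (exitVars Φ xs ys) w) ν₀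
      (params Φ xs ys) :=
    (eqOn_updVec (disjoint_params_of_freshN_le Φ xs ys (freshN_le_exitVars Φ xs ys))).trans <|
      (eqOn_updVec (disjoint_params_of_freshN_le Φ xs ys (freshN_le_entryVars Φ xs ys))).trans
        hν
  rw [sat_and, sat_and, h.sat_exVec_ys hdist hyz hν', h.sat_tc hdist hν',
    h.sat_exVec_xs hdist hxw hν',
    updVec_comp_of_disjoint fun i j => (hxw j i).symm,
    updVec_comp_of_disjoint fun i j => (hxz j i).symm,
    updVec_comp_of_disjoint fun i j => (hyw j i).symm,
    updVec_comp_of_disjoint fun i j => (hyz j i).symm,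
    updVec_comp_of_disjoint (exitVars_ne_entryVars Φ xs ys),
    updVec_comp_self (entryVars_injective Φ xs ys), updVec_comp_self (exitVars_injective Φ xs ys)]

theorem defines_pathFormula (hdist : Distinct2 xs ys) (ν₀ : ℕ → Pos t) :
    ∀ l : List Q, Defines Φ xs ys ν₀ (pathFormula Φ xs ys l)
      (PathThrough (MStep Φ xs ys t ν₀) {r | r ∈ l})
  | [] => fun p q ν hν => by
    have hS : {x | x ∈ ([] : List Q)} = ∅ := by simp
    rw [hS, pathThrough_empty]
    exact defines_mStep p q ν hν
  | r :: l => fun p q ν hν => by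
    have hS : {x | x ∈ r :: l} = insert r {x | x ∈ l} := by ext; simp
    rw [hS, pathThrough_insert]
    exact (defines_pathFormula hdist ν₀ l).kleeneForm hdist r p q ν hν

theorem sat_pathFormula (hdist : Distinct2 xs ys) (l : List Q) (p q : Q) (ν : ℕ → Pos t)
    (a b : Fin k → Pos t) :
    Sat t (pathFormula Φ xs ys l p q) (updVec (updVec ν xs a) ys b) ↔
      PathThrough (MStep Φ xs ys t ν) {r | r ∈ l} (p, a) (q, b) := by
  rw [defines_pathFormula hdist ν l p q _ ((eqOn_updVec (disjoint_range_ys_params Φ xs ys)).trans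
      (eqOn_updVec (disjoint_range_xs_params Φ xs ys))),
    updVec_updVec_comp_left hdist, updVec_updVec_comp_right hdist]

end KleeneConstruction

section WellFormedness

variable {Q : Type} {Φ : Q → Q → TForm Sig rank k} {xs ys : Fin k → ℕ}

theorem DetMatrix.rightUnique_mStep (hdet : DetMatrix Φ xs ys) (t : RTree Sig rank)
    (ν : ℕ → Pos t) : Relator.RightUnique (MStep Φ xs ys t ν) := fun c d d' h h' =>
  let ⟨hq, hb⟩ := hdet t ν c.1 d.1 d'.1 c.2 d.2 d'.2 h h'
  Prod.ext hq hb

variable [Fintype Q]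

theorem wf_pathFormula (hdist : Distinct2 xs ys) (hwf : ∀ p q, WF (Φ p q)) :
    ∀ (l : List Q) (p q : Q), WF (pathFormula Φ xs ys l p q)
  | [], p, q => hwf p q
  | r :: l, p, q =>
    have ih := wf_pathFormula hdist hwf l
    have hfree : Set.range xs ∪ Set.range ys ⊆
        freeVars (.and (pathFormula Φ xs ys l r r) (.and (eqVec xs xs) (eqVec ys ys))) :=
      (Set.union_subset_union range_subset_freeVars_eqVec range_subset_freeVars_eqVec).trans
        Set.subset_union_right
    ⟨ih p q, wf_exVec <| wf_exVec
      ⟨wf_exVec ⟨ih p r, wf_eqVec⟩, ⟨hdist, hfree, ih r r, wf_eqVec, wf_eqVec⟩,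
        wf_exVec ⟨ih r q, wf_eqVec⟩⟩⟩

theorem functionalIn_loop (hdist : Distinct2 xs ys) (hdet : DetMatrix Φ xs ys) {l : List Q}
    {r : Q} (hr : r ∉ l) :
    FunctionalIn (.and (pathFormula Φ xs ys l r r) (.and (eqVec xs xs) (eqVec ys ys))) xs ys := by
  intro t ν a b b' h h'
  rw [sat_and, sat_pathFormula hdist] at h h'
  have hr' : r ∉ {x | x ∈ l} := hr
  exact congrArg Prod.snd (h.1.unique (hdet.rightUnique_mStep t ν) h'.1 hr' hr')

theorem detTC_pathFormula (hdist : Distinct2 xs ys) (hdtc : ∀ p q, DetTC (Φ p q))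
    (hdet : DetMatrix Φ xs ys) :
    ∀ l : List Q, l.Nodup → ∀ p q, DetTC (pathFormula Φ xs ys l p q)
  | [], _, p, q => hdtc p q
  | r :: l, hnd, p, q =>
    have ih := detTC_pathFormula hdist hdtc hdet l (List.nodup_cons.mp hnd).2
    ⟨ih p q, detTC_exVec <| detTC_exVec
      ⟨detTC_exVec ⟨ih p r, detTC_eqVec⟩,
        ⟨functionalIn_loop hdist hdet (List.nodup_cons.mp hnd).1, ih r r, detTC_eqVec,
          detTC_eqVec⟩,
        detTC_exVec ⟨ih r q, detTC_eqVec⟩⟩⟩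

end WellFormedness

theorem compClosure_in_FODTC_general (Sig : Type) (rank : Sig → ℕ)
    (k : ℕ) (Q : Type) [Fintype Q]
    (Φ : Q → Q → TForm Sig rank k) (xs ys : Fin k → ℕ)
    (hdist : Distinct2 xs ys) (hwf : ∀ p q, WF (Φ p q))
    (hdtc : ∀ p q, DetTC (Φ p q)) (hdet : DetMatrix Φ xs ys) :
    ∃ Ψ : Q → Q → TForm Sig rank k,
      (∀ p q, WF (Ψ p q) ∧ DetTC (Ψ p q)) ∧
      ∀ (p q : Q) (t : RTree Sig rank) (ν : ℕ → Pos t) (a b : Fin k → Pos t),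
        Sat t (Ψ p q) (updVec (updVec ν xs a) ys b) ↔
          CompClosure Φ xs ys t ν p q a b := by
  let states := (Finset.univ : Finset Q).toList
  have hstates : {r | r ∈ states} = Set.univ := by ext; simp [states]
  refine ⟨pathFormula Φ xs ys states, fun p q => ⟨wf_pathFormula hdist hwf states p q,
    detTC_pathFormula hdist hdtc hdet states (Finset.nodup_toList _) p q⟩, ?_⟩
  intro p q t ν a b
  rw [sat_pathFormula hdist, hstates, pathThrough_univ]
  rfl

/-- Lemma 2(3). If the matrix `Φ` is deterministic and every
entry is a formula of `FO+DTC^k` (all transitive closures deterministic), then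
every entry of the computation closure `Φ^#` is expressible in `FO+DTC^k`. -/
theorem compClosure_in_FODTC (Sig : Type) [Fintype Sig] (rank : Sig → ℕ)
    (k : ℕ) (hk : 1 ≤ k) (Q : Type) [Fintype Q]
    (Φ : Q → Q → TForm Sig rank k) (xs ys : Fin k → ℕ)
    (hdist : Distinct2 xs ys) (hwf : ∀ p q, WF (Φ p q))
    (hdtc : ∀ p q, DetTC (Φ p q)) (hdet : DetMatrix Φ xs ys) :
    ∃ Ψ : Q → Q → TForm Sig rank k,
      (∀ p q, WF (Ψ p q) ∧ DetTC (Ψ p q)) ∧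
      ∀ (p q : Q) (t : RTree Sig rank) (ν : ℕ → Pos t) (a b : Fin k → Pos t),
        Sat t (Ψ p q) (updVec (updVec ν xs a) ys b) ↔
          CompClosure Φ xs ys t ν p q a b :=
  compClosure_in_FODTC_general Sig rank k Q Φ xs ys hdist hwf hdtc hdet

end NestedPebbles
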